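/- arXiv:1401.7700 — 3 statements merged into one kernel-verified Lean document; each statement's English description precedes it below -/
import Mathlib

section
/- For n ≥ 4 agents and m ≥ 4 alternatives, there exists no randomized social choice rule defined on profiles of weak orders that is simultaneously anonymous, neutral, SD-efficient, and weakly SD group-strategyproof. -/
open Finset
open scoped Classical

/-- A (binary-relation) preference over `m` alternatives; `R a b` means `a ≿ b`. -/
abbrev VPref (m : ℕ) := Fin m → Fin m → Prop

/-- A weak order: a complete and transitive relation (ties allowed). -/
def IsWeakOrder {m : ℕ} (R : VPref m) : Prop :=
  (∀ a b c, R a b → R b c → R a c) ∧ (∀ a b, R a b ∨ R b a)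

/-- A profile of weak orders, one for each agent. -/
def ValidWeakProfile {n m : ℕ} (pref : Fin n → VPref m) : Prop :=
  ∀ i, IsWeakOrder (pref i)

/-- A lottery over the `m` alternatives. -/
def IsLottery {m : ℕ} (p : Fin m → ℝ) : Prop :=
  (∀ a, 0 ≤ p a) ∧ (∑ a, p a = 1)

/-- `p` (first-order) stochastically dominates `q` w.r.t. preference `R`. -/
def sdPrefersLot {m : ℕ} (R : VPref m) (p q : Fin m → ℝ) : Prop :=
  ∀ a : Fin m,
    ∑ b ∈ univ.filter (fun b => R b a), p b ≥
    ∑ b ∈ univ.filter (fun b => R b a), q b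

/-- Strict stochastic dominance between lotteries. -/
def sdStrictLot {m : ℕ} (R : VPref m) (p q : Fin m → ℝ) : Prop :=
  sdPrefersLot R p q ∧ ¬ sdPrefersLot R q p

/-- SD-efficiency of a lottery at a profile. -/
def SDEfficientLottery (n m : ℕ) (pref : Fin n → VPref m) (p : Fin m → ℝ) : Prop :=
  ¬ ∃ q : Fin m → ℝ, IsLottery q ∧
      (∀ i, sdPrefersLot (pref i) q p) ∧
      ∃ j, sdStrictLot (pref j) q p

/-- Anonymity: permuting the agents' reports leaves the outcome unchanged. -/
def AnonymousSCF (n m : ℕ) (f : (Fin n → VPref m) → Fin m → ℝ) : Prop :=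
  ∀ (pref : Fin n → VPref m) (σ : Equiv.Perm (Fin n)), ValidWeakProfile pref →
    f (fun i => pref (σ i)) = f pref

/-- Neutrality: relabelling the alternatives relabels the returned lottery. -/
def NeutralSCF (n m : ℕ) (f : (Fin n → VPref m) → Fin m → ℝ) : Prop :=
  ∀ (pref : Fin n → VPref m) (τ : Equiv.Perm (Fin m)), ValidWeakProfile pref →
    ∀ a, f (fun j x y => pref j (τ.symm x) (τ.symm y)) a = f pref (τ.symm a)

/-- Weak SD group-strategyproofness: no nonempty coalition can jointly
misreport so that every member strictly SD-prefers the new lottery. -/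
def WeakSDGroupSPSCF (n m : ℕ) (f : (Fin n → VPref m) → Fin m → ℝ) : Prop :=
  ¬ ∃ (pref pref' : Fin n → VPref m) (S : Finset (Fin n)),
      ValidWeakProfile pref ∧ S.Nonempty ∧
      (∀ i ∈ S, IsWeakOrder (pref' i)) ∧
      (∀ i ∉ S, pref' i = pref i) ∧
      ∀ i ∈ S, sdStrictLot (pref i) (f pref') (f pref)

/-- rank-induced preference -/
def mkP {m : ℕ} (r : Fin m → ℕ) : VPref m := fun x y => r y ≤ r x

lemma mkP_wo {m : ℕ} (r : Fin m → ℕ) : IsWeakOrder (mkP r) :=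
  ⟨fun _ _ _ h1 h2 => le_trans h2 h1, fun a b => le_total (r b) (r a)⟩

def rkImp {m : ℕ} (v0 v1 v2 v3 : ℕ) : Fin m → ℕ := fun b =>
  if b.val = 0 then v0 else if b.val = 1 then v1 else if b.val = 2 then v2
  else if b.val = 3 then v3 else 0

lemma rk_hi {m : ℕ} (v0 v1 v2 v3 : ℕ) (b : Fin m) (h : 4 ≤ b.val) :
    rkImp v0 v1 v2 v3 b = 0 := by
  unfold rkImp
  rw [if_neg (by omega), if_neg (by omega), if_neg (by omega), if_neg (by omega)]

lemma sum_filter_quad {m : ℕ} (a0 a1 a2 a3 : Fin m)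
    (h0 : a0.val = 0) (h1 : a1.val = 1) (h2 : a2.val = 2) (h3 : a3.val = 3)
    (p : Fin m → ℝ) (hz : ∀ b : Fin m, 4 ≤ b.val → p b = 0)
    (φ : Fin m → Prop) [DecidablePred φ] :
    ∑ b ∈ univ.filter φ, p b =
      (if φ a0 then p a0 else 0) + (if φ a1 then p a1 else 0) +
      (if φ a2 then p a2 else 0) + (if φ a3 then p a3 else 0) := by
  have hne01 : a0 ≠ a1 := by rw [Fin.ne_iff_vne]; omega
  have hne02 : a0 ≠ a2 := by rw [Fin.ne_iff_vne]; omega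
  have hne03 : a0 ≠ a3 := by rw [Fin.ne_iff_vne]; omega
  have hne12 : a1 ≠ a2 := by rw [Fin.ne_iff_vne]; omega
  have hne13 : a1 ≠ a3 := by rw [Fin.ne_iff_vne]; omega
  have hne23 : a2 ≠ a3 := by rw [Fin.ne_iff_vne]; omega
  have hmain : ∑ b ∈ univ.filter φ, p b
      = ∑ b ∈ ({a0, a1, a2, a3} : Finset (Fin m)).filter φ, p b := by
    refine (Finset.sum_subset (Finset.filter_subset_filter φ (Finset.subset_univ _)) ?_).symm
    intro x hx hnx
    have hφ : φ x := (Finset.mem_filter.1 hx).2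
    have hxq : x ∉ ({a0, a1, a2, a3} : Finset (Fin m)) := fun hmem =>
      hnx (Finset.mem_filter.2 ⟨hmem, hφ⟩)
    simp only [Finset.mem_insert, Finset.mem_singleton, not_or] at hxq
    obtain ⟨e0, e1, e2, e3⟩ := hxq
    apply hz
    have v0 : x.val ≠ 0 := fun h => e0 (Fin.ext (by omega))
    have v1 : x.val ≠ 1 := fun h => e1 (Fin.ext (by omega))
    have v2 : x.val ≠ 2 := fun h => e2 (Fin.ext (by omega))
    have v3 : x.val ≠ 3 := fun h => e3 (Fin.ext (by omega))
    omega
  rw [hmain, Finset.sum_filter]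
  rw [show ({a0, a1, a2, a3} : Finset (Fin m)) = insert a0 (insert a1 (insert a2 {a3})) from rfl]
  rw [Finset.sum_insert (by simp [hne01, hne02, hne03]),
      Finset.sum_insert (by simp [hne12, hne13]),
      Finset.sum_insert (by simp [hne23]), Finset.sum_singleton]
  ring

lemma sum_quad_total {m : ℕ} (a0 a1 a2 a3 : Fin m)
    (h0 : a0.val = 0) (h1 : a1.val = 1) (h2 : a2.val = 2) (h3 : a3.val = 3)
    (p : Fin m → ℝ) (hz : ∀ b : Fin m, 4 ≤ b.val → p b = 0) :
    ∑ b, p b = p a0 + p a1 + p a2 + p a3 := by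
  have := sum_filter_quad a0 a1 a2 a3 h0 h1 h2 h3 p hz (fun _ => True)
  simpa using this

lemma eff_kill {n m : ℕ} (f : (Fin n → VPref m) → Fin m → ℝ)
    (hlot : ∀ pref, ValidWeakProfile pref → IsLottery (f pref))
    (heff : ∀ pref, ValidWeakProfile pref → SDEfficientLottery n m pref (f pref))
    (pref : Fin n → VPref m) (hv : ValidWeakProfile pref) (x y : Fin m)
    (hall : ∀ i, pref i y x) (j : Fin n) (hstr : ¬ pref j x y) : f pref x = 0 := by
  by_contra hne
  have hl := hlot pref hv
  have hpos : 0 < f pref x := (hl.1 x).lt_of_ne (Ne.symm hne)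
  have hxy : x ≠ y := by rintro rfl; exact hstr (hall j)
  set p := f pref with hp
  set q : Fin m → ℝ :=
    fun b => p b + (if b = y then p x else 0) - (if b = x then p x else 0) with hq
  have hsum : ∀ U : Finset (Fin m), ∑ b ∈ U, q b =
      (∑ b ∈ U, p b) + (if y ∈ U then p x else 0) - (if x ∈ U then p x else 0) := by
    intro U
    rw [hq]
    rw [Finset.sum_sub_distrib, Finset.sum_add_distrib,
        Finset.sum_ite_eq' U y (fun _ => p x), Finset.sum_ite_eq' U x (fun _ => p x)]
  have hql : IsLottery q := by
    constructor
    · intro b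
      by_cases hbx : b = x
      · subst hbx; simp [hq, hxy]
      · by_cases hby : b = y
        · subst hby
          have h0 := hl.1 b
          simp [hq, hbx]
          linarith
        · simp only [hq, if_neg hbx, if_neg hby]
          have := hl.1 b
          linarith
    · rw [show (∑ b, q b) = ∑ b ∈ Finset.univ, q b from rfl, hsum Finset.univ]
      simp only [Finset.mem_univ, if_pos]
      rw [show (∑ b ∈ Finset.univ, p b) = ∑ b, p b from rfl, hl.2]
      ring
  have hdom : ∀ i, sdPrefersLot (pref i) q p := by
    intro i a
    rw [hsum]
    set U := Finset.univ.filter (fun b => pref i b a) with hU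
    by_cases hxU : x ∈ U
    · have hpx : pref i x a := (Finset.mem_filter.1 hxU).2
      have hyU : y ∈ U := Finset.mem_filter.2 ⟨Finset.mem_univ _, (hv i).1 y x a (hall i) hpx⟩
      rw [if_pos hyU, if_pos hxU]
      apply le_of_eq; ring
    · rw [if_neg hxU]
      by_cases hyU : y ∈ U
      · rw [if_pos hyU]; linarith
      · rw [if_neg hyU]; apply le_of_eq; ring
  have hrefl : pref j y y := by rcases (hv j).2 y y with h | h <;> exact h
  have hnrev : ¬ sdPrefersLot (pref j) p q := by
    intro hcon
    have hcy := hcon y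
    set U := Finset.univ.filter (fun b => pref j b y) with hU
    have hyU : y ∈ U := Finset.mem_filter.2 ⟨Finset.mem_univ _, hrefl⟩
    have hxU : x ∉ U := by
      intro hmem
      exact hstr (Finset.mem_filter.1 hmem).2
    have := hsum U
    rw [if_pos hyU, if_neg hxU] at this
    have hge : ∑ b ∈ U, p b ≥ ∑ b ∈ U, q b := hcy
    rw [this] at hge
    linarith
  exact heff pref hv ⟨q, hql, hdom, j, hdom j, hnrev⟩

lemma sym_eq {n m : ℕ} (f : (Fin n → VPref m) → Fin m → ℝ)
    (han : AnonymousSCF n m f) (hne : NeutralSCF n m f)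
    (pref : Fin n → VPref m) (hv : ValidWeakProfile pref)
    (τ : Equiv.Perm (Fin m)) (σ : Equiv.Perm (Fin n))
    (hcomp : (fun j x y => pref j (τ.symm x) (τ.symm y)) = fun i => pref (σ i))
    (x : Fin m) : f pref (τ.symm x) = f pref x := by
  have h1 := hne pref τ hv x
  rw [hcomp, han pref σ hv] at h1
  exact h1.symm

lemma rk_eval0 {m : ℕ} (v0 v1 v2 v3 : ℕ) (b : Fin m) (h : b.val = 0) :
    rkImp v0 v1 v2 v3 b = v0 := by unfold rkImp; rw [if_pos h]
lemma rk_eval1 {m : ℕ} (v0 v1 v2 v3 : ℕ) (b : Fin m) (h : b.val = 1) :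
    rkImp v0 v1 v2 v3 b = v1 := by unfold rkImp; rw [if_neg (by omega), if_pos h]
lemma rk_eval2 {m : ℕ} (v0 v1 v2 v3 : ℕ) (b : Fin m) (h : b.val = 2) :
    rkImp v0 v1 v2 v3 b = v2 := by
  unfold rkImp; rw [if_neg (by omega), if_neg (by omega), if_pos h]
lemma rk_eval3 {m : ℕ} (v0 v1 v2 v3 : ℕ) (b : Fin m) (h : b.val = 3) :
    rkImp v0 v1 v2 v3 b = v3 := by
  unfold rkImp; rw [if_neg (by omega), if_neg (by omega), if_neg (by omega), if_pos h]
lemma rk_zero1 {m : ℕ} (v1 v2 v3 : ℕ) (b : Fin m)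
    (h1 : b.val ≠ 1) (h2 : b.val ≠ 2) (h3 : b.val ≠ 3) : rkImp 0 v1 v2 v3 b = 0 := by
  unfold rkImp
  by_cases e0 : b.val = 0
  · rw [if_pos e0]
  · rw [if_neg e0, if_neg h1, if_neg h2, if_neg h3]
lemma rk_ind {m : ℕ} (b : Fin m) : rkImp 0 0 0 0 b = 0 := by
  unfold rkImp; split_ifs <;> rfl

/-- profile F -/
def PF {n m : ℕ} : Fin n → VPref m := fun i =>
  if i.val = 2 then mkP (rkImp 0 0 0 1)
  else if i.val = 3 then mkP (rkImp 0 2 2 1)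
  else mkP (rkImp 0 0 0 0)

def PP1 {n m : ℕ} : Fin n → VPref m := fun i =>
  if i.val = 1 then mkP (rkImp 0 1 2 2)
  else if i.val = 2 then mkP (rkImp 0 2 1 2)
  else if i.val = 3 then mkP (rkImp 0 2 2 1)
  else mkP (rkImp 0 0 0 0)

def PP2 {n m : ℕ} : Fin n → VPref m := fun i =>
  if i.val = 2 then mkP (rkImp 2 0 1 2)
  else if i.val = 3 then mkP (rkImp 0 2 2 1)
  else mkP (rkImp 0 0 0 0)

lemma valid_PF {n m : ℕ} : ValidWeakProfile (PF (n := n) (m := m)) := by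
  intro i; unfold PF; split_ifs <;> exact mkP_wo _
lemma valid_PP1 {n m : ℕ} : ValidWeakProfile (PP1 (n := n) (m := m)) := by
  intro i; unfold PP1; split_ifs <;> exact mkP_wo _
lemma valid_PP2 {n m : ℕ} : ValidWeakProfile (PP2 (n := n) (m := m)) := by
  intro i; unfold PP2; split_ifs <;> exact mkP_wo _

/-- reduce SD-dominance for rank prefs with bottom `a0`/extras to three checks -/
lemma sd_mk {m : ℕ} (a0 a1 a2 a3 : Fin m)
    (h0 : a0.val = 0) (h1 : a1.val = 1) (h2 : a2.val = 2) (h3 : a3.val = 3)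
    (r : Fin m → ℕ) (hr4 : ∀ b : Fin m, 4 ≤ b.val → r b = 0) (hr0 : r a0 = 0)
    (p q : Fin m → ℝ)
    (hp4 : ∀ b : Fin m, 4 ≤ b.val → p b = 0) (hq4 : ∀ b : Fin m, 4 ≤ b.val → q b = 0)
    (hptot : ∑ b, p b = 1) (hqtot : ∑ b, q b = 1)
    (I1 : (if mkP r a0 a1 then p a0 else 0) + (if mkP r a1 a1 then p a1 else 0) +
          (if mkP r a2 a1 then p a2 else 0) + (if mkP r a3 a1 then p a3 else 0) ≥
          (if mkP r a0 a1 then q a0 else 0) + (if mkP r a1 a1 then q a1 else 0) +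
          (if mkP r a2 a1 then q a2 else 0) + (if mkP r a3 a1 then q a3 else 0))
    (I2 : (if mkP r a0 a2 then p a0 else 0) + (if mkP r a1 a2 then p a1 else 0) +
          (if mkP r a2 a2 then p a2 else 0) + (if mkP r a3 a2 then p a3 else 0) ≥
          (if mkP r a0 a2 then q a0 else 0) + (if mkP r a1 a2 then q a1 else 0) +
          (if mkP r a2 a2 then q a2 else 0) + (if mkP r a3 a2 then q a3 else 0))
    (I3 : (if mkP r a0 a3 then p a0 else 0) + (if mkP r a1 a3 then p a1 else 0) +
          (if mkP r a2 a3 then p a2 else 0) + (if mkP r a3 a3 then p a3 else 0) ≥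
          (if mkP r a0 a3 then q a0 else 0) + (if mkP r a1 a3 then q a1 else 0) +
          (if mkP r a2 a3 then q a2 else 0) + (if mkP r a3 a3 then q a3 else 0)) :
    sdPrefersLot (mkP r) p q := by
  intro x
  have hc : x.val = 0 ∨ x.val = 1 ∨ x.val = 2 ∨ x.val = 3 ∨ 4 ≤ x.val := by omega
  have htriv : r x = 0 → (∑ b ∈ univ.filter (fun b => mkP r b x), p b ≥
      ∑ b ∈ univ.filter (fun b => mkP r b x), q b) := by
    intro hrx
    have hfil : univ.filter (fun b => mkP r b x) = univ :=
      Finset.filter_true_of_mem (fun b _ => by simp [mkP, hrx])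
    rw [hfil]
    rw [show (∑ b ∈ univ, p b) = ∑ b, p b from rfl, hptot,
        show (∑ b ∈ univ, q b) = ∑ b, q b from rfl, hqtot]
  rcases hc with h | h | h | h | h
  · exact htriv (by rw [show x = a0 from Fin.ext (by omega)]; exact hr0)
  · rw [show x = a1 from Fin.ext (by omega),
        sum_filter_quad a0 a1 a2 a3 h0 h1 h2 h3 p hp4 _,
        sum_filter_quad a0 a1 a2 a3 h0 h1 h2 h3 q hq4 _]
    exact I1
  · rw [show x = a2 from Fin.ext (by omega),
        sum_filter_quad a0 a1 a2 a3 h0 h1 h2 h3 p hp4 _,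
        sum_filter_quad a0 a1 a2 a3 h0 h1 h2 h3 q hq4 _]
    exact I2
  · rw [show x = a3 from Fin.ext (by omega),
        sum_filter_quad a0 a1 a2 a3 h0 h1 h2 h3 p hp4 _,
        sum_filter_quad a0 a1 a2 a3 h0 h1 h2 h3 q hq4 _]
    exact I3
  · exact htriv (hr4 x h)

/-- to refute SD-dominance, one failed upper set suffices -/
lemma not_sd_mk {m : ℕ} (a0 a1 a2 a3 : Fin m)
    (h0 : a0.val = 0) (h1 : a1.val = 1) (h2 : a2.val = 2) (h3 : a3.val = 3)
    (r : Fin m → ℕ) (x : Fin m)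
    (p q : Fin m → ℝ)
    (hp4 : ∀ b : Fin m, 4 ≤ b.val → p b = 0) (hq4 : ∀ b : Fin m, 4 ≤ b.val → q b = 0)
    (hlt : (if mkP r a0 x then p a0 else 0) + (if mkP r a1 x then p a1 else 0) +
          (if mkP r a2 x then p a2 else 0) + (if mkP r a3 x then p a3 else 0) <
          (if mkP r a0 x then q a0 else 0) + (if mkP r a1 x then q a1 else 0) +
          (if mkP r a2 x then q a2 else 0) + (if mkP r a3 x then q a3 else 0)) :
    ¬ sdPrefersLot (mkP r) p q := by
  intro hcon
  have := hcon x
  rw [sum_filter_quad a0 a1 a2 a3 h0 h1 h2 h3 p hp4 _,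
      sum_filter_quad a0 a1 a2 a3 h0 h1 h2 h3 q hq4 _] at this
  linarith

/-- For `n ≥ 4` agents and `m ≥ 4` alternatives, there is no
randomized social choice rule on profiles of weak orders that is anonymous,
neutral, SD-efficient, and weakly SD group-strategyproof. -/
theorem no_anonymous_neutral_sdEfficient_groupSP_scf (n m : ℕ)
    (hn : 4 ≤ n) (hm : 4 ≤ m) :
    ¬ ∃ f : (Fin n → VPref m) → Fin m → ℝ,
        (∀ pref, ValidWeakProfile pref → IsLottery (f pref)) ∧
        AnonymousSCF n m f ∧
        NeutralSCF n m f ∧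
        (∀ pref, ValidWeakProfile pref → SDEfficientLottery n m pref (f pref)) ∧
        WeakSDGroupSPSCF n m f := by

  rintro ⟨f, hlot, han, hnu, heff, hsp⟩
  obtain ⟨a0, hva0⟩ : ∃ x : Fin m, x.val = 0 := ⟨⟨0, by omega⟩, rfl⟩
  obtain ⟨a1, hva1⟩ : ∃ x : Fin m, x.val = 1 := ⟨⟨1, by omega⟩, rfl⟩
  obtain ⟨a2, hva2⟩ : ∃ x : Fin m, x.val = 2 := ⟨⟨2, by omega⟩, rfl⟩
  obtain ⟨a3, hva3⟩ : ∃ x : Fin m, x.val = 3 := ⟨⟨3, by omega⟩, rfl⟩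
  obtain ⟨i1, hvi1⟩ : ∃ i : Fin n, i.val = 1 := ⟨⟨1, by omega⟩, rfl⟩
  obtain ⟨i2, hvi2⟩ : ∃ i : Fin n, i.val = 2 := ⟨⟨2, by omega⟩, rfl⟩
  obtain ⟨i3, hvi3⟩ : ∃ i : Fin n, i.val = 3 := ⟨⟨3, by omega⟩, rfl⟩
  have hne01 : a0 ≠ a1 := by rw [Fin.ne_iff_vne]; omega
  have hne02 : a0 ≠ a2 := by rw [Fin.ne_iff_vne]; omega
  have hne03 : a0 ≠ a3 := by rw [Fin.ne_iff_vne]; omega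
  have hne12 : a1 ≠ a2 := by rw [Fin.ne_iff_vne]; omega
  have hne13 : a1 ≠ a3 := by rw [Fin.ne_iff_vne]; omega
  have hne23 : a2 ≠ a3 := by rw [Fin.ne_iff_vne]; omega
  have hni12 : i1 ≠ i2 := by rw [Fin.ne_iff_vne]; omega
  have hni13 : i1 ≠ i3 := by rw [Fin.ne_iff_vne]; omega
  have hni23 : i2 ≠ i3 := by rw [Fin.ne_iff_vne]; omega
  have hvF : ValidWeakProfile (PF (n := n) (m := m)) := valid_PF
  have hv1p : ValidWeakProfile (PP1 (n := n) (m := m)) := valid_PP1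
  have hv2p : ValidWeakProfile (PP2 (n := n) (m := m)) := valid_PP2
  have hlF := hlot PF hvF
  have hl1 := hlot PP1 hv1p
  have hl2 := hlot PP2 hv2p
  -- profile component computations
  have hPFi2 : (PF (n := n) (m := m)) i2 = mkP (rkImp 0 0 0 1) := by
    simp only [PF]; rw [if_pos hvi2]
  have hPFi3 : (PF (n := n) (m := m)) i3 = mkP (rkImp 0 2 2 1) := by
    simp only [PF]; rw [if_neg (by rw [hvi3]; omega), if_pos hvi3]
  have hPP1i1 : (PP1 (n := n) (m := m)) i1 = mkP (rkImp 0 1 2 2) := by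
    simp only [PP1]; rw [if_pos hvi1]
  have hPP1i2 : (PP1 (n := n) (m := m)) i2 = mkP (rkImp 0 2 1 2) := by
    simp only [PP1]; rw [if_neg (by rw [hvi2]; omega), if_pos hvi2]
  have hPP1i3 : (PP1 (n := n) (m := m)) i3 = mkP (rkImp 0 2 2 1) := by
    simp only [PP1]
    rw [if_neg (by rw [hvi3]; omega), if_neg (by rw [hvi3]; omega), if_pos hvi3]
  have hPP2i2 : (PP2 (n := n) (m := m)) i2 = mkP (rkImp 2 0 1 2) := by
    simp only [PP2]; rw [if_pos hvi2]
  have hPP2i3 : (PP2 (n := n) (m := m)) i3 = mkP (rkImp 0 2 2 1) := by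
    simp only [PP2]; rw [if_neg (by rw [hvi3]; omega), if_pos hvi3]
  -- === kill facts ===
  have hzF : ∀ b : Fin m, b.val ≠ 1 → b.val ≠ 2 → b.val ≠ 3 → f PF b = 0 := by
    intro b hb1 hb2 hb3
    refine eff_kill f hlot heff PF hvF b a3 ?_ i2 ?_
    · intro i
      simp only [PF]; split_ifs
      · show rkImp 0 0 0 1 b ≤ rkImp 0 0 0 1 a3
        rw [rk_zero1 _ _ _ b hb1 hb2 hb3, rk_eval3 _ _ _ _ a3 hva3]; try omega
      · show rkImp 0 2 2 1 b ≤ rkImp 0 2 2 1 a3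
        rw [rk_zero1 _ _ _ b hb1 hb2 hb3, rk_eval3 _ _ _ _ a3 hva3]; try omega
      · show rkImp 0 0 0 0 b ≤ rkImp 0 0 0 0 a3
        rw [rk_ind, rk_ind]
    · rw [hPFi2]
      show ¬ (rkImp 0 0 0 1 a3 ≤ rkImp 0 0 0 1 b)
      rw [rk_zero1 _ _ _ b hb1 hb2 hb3, rk_eval3 _ _ _ _ a3 hva3]; try omega
  have hz1 : ∀ b : Fin m, b.val ≠ 1 → b.val ≠ 2 → b.val ≠ 3 → f PP1 b = 0 := by
    intro b hb1 hb2 hb3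
    refine eff_kill f hlot heff PP1 hv1p b a1 ?_ i1 ?_
    · intro i
      simp only [PP1]; split_ifs
      · show rkImp 0 1 2 2 b ≤ rkImp 0 1 2 2 a1
        rw [rk_zero1 _ _ _ b hb1 hb2 hb3, rk_eval1 _ _ _ _ a1 hva1]; try omega
      · show rkImp 0 2 1 2 b ≤ rkImp 0 2 1 2 a1
        rw [rk_zero1 _ _ _ b hb1 hb2 hb3, rk_eval1 _ _ _ _ a1 hva1]; try omega
      · show rkImp 0 2 2 1 b ≤ rkImp 0 2 2 1 a1
        rw [rk_zero1 _ _ _ b hb1 hb2 hb3, rk_eval1 _ _ _ _ a1 hva1]; try omega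
      · show rkImp 0 0 0 0 b ≤ rkImp 0 0 0 0 a1
        rw [rk_ind, rk_ind]
    · rw [hPP1i1]
      show ¬ (rkImp 0 1 2 2 a1 ≤ rkImp 0 1 2 2 b)
      rw [rk_zero1 _ _ _ b hb1 hb2 hb3, rk_eval1 _ _ _ _ a1 hva1]; try omega
  have hz2 : ∀ b : Fin m, b.val ≠ 2 → b.val ≠ 3 → f PP2 b = 0 := by
    intro b hb2 hb3
    by_cases hb1 : b.val = 1
    · -- kill b (=alt 1) using alt 2, strict for agent i2
      refine eff_kill f hlot heff PP2 hv2p b a2 ?_ i2 ?_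
      · intro i
        simp only [PP2]; split_ifs
        · show rkImp 2 0 1 2 b ≤ rkImp 2 0 1 2 a2
          rw [rk_eval1 _ _ _ _ b hb1, rk_eval2 _ _ _ _ a2 hva2]; try omega
        · show rkImp 0 2 2 1 b ≤ rkImp 0 2 2 1 a2
          rw [rk_eval1 _ _ _ _ b hb1, rk_eval2 _ _ _ _ a2 hva2]; try omega
        · show rkImp 0 0 0 0 b ≤ rkImp 0 0 0 0 a2
          rw [rk_ind, rk_ind]
      · rw [hPP2i2]
        show ¬ (rkImp 2 0 1 2 a2 ≤ rkImp 2 0 1 2 b)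
        rw [rk_eval1 _ _ _ _ b hb1, rk_eval2 _ _ _ _ a2 hva2]; try omega
    · -- kill using alt 3, strict for agent i3
      refine eff_kill f hlot heff PP2 hv2p b a3 ?_ i3 ?_
      · intro i
        simp only [PP2]; split_ifs
        · show rkImp 2 0 1 2 b ≤ rkImp 2 0 1 2 a3
          rw [rk_eval3 _ _ _ _ a3 hva3]
          by_cases hb0 : b.val = 0
          · rw [rk_eval0 _ _ _ _ b hb0]
          · unfold rkImp
            rw [if_neg hb0, if_neg hb1, if_neg hb2, if_neg hb3]; omega
        · show rkImp 0 2 2 1 b ≤ rkImp 0 2 2 1 a3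
          rw [rk_zero1 _ _ _ b hb1 hb2 hb3, rk_eval3 _ _ _ _ a3 hva3]; try omega
        · show rkImp 0 0 0 0 b ≤ rkImp 0 0 0 0 a3
          rw [rk_ind, rk_ind]
      · rw [hPP2i3]
        show ¬ (rkImp 0 2 2 1 a3 ≤ rkImp 0 2 2 1 b)
        rw [rk_zero1 _ _ _ b hb1 hb2 hb3, rk_eval3 _ _ _ _ a3 hva3]; try omega
  -- 4-support versions
  have hz4F : ∀ b : Fin m, 4 ≤ b.val → f PF b = 0 := fun b hb =>
    hzF b (by omega) (by omega) (by omega)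
  have hz41 : ∀ b : Fin m, 4 ≤ b.val → f PP1 b = 0 := fun b hb =>
    hz1 b (by omega) (by omega) (by omega)
  have hz42 : ∀ b : Fin m, 4 ≤ b.val → f PP2 b = 0 := fun b hb =>
    hz2 b (by omega) (by omega)
  -- totals
  have htF : f PF a0 + f PF a1 + f PF a2 + f PF a3 = 1 := by
    rw [← sum_quad_total a0 a1 a2 a3 hva0 hva1 hva2 hva3 (f PF) hz4F]; exact hlF.2
  have ht1 : f PP1 a0 + f PP1 a1 + f PP1 a2 + f PP1 a3 = 1 := by
    rw [← sum_quad_total a0 a1 a2 a3 hva0 hva1 hva2 hva3 (f PP1) hz41]; exact hl1.2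
  have ht2 : f PP2 a0 + f PP2 a1 + f PP2 a2 + f PP2 a3 = 1 := by
    rw [← sum_quad_total a0 a1 a2 a3 hva0 hva1 hva2 hva3 (f PP2) hz42]; exact hl2.2
  -- === symmetry of F under swapping alternatives 1 and 2 ===
  have hrD_inv : ∀ z : Fin m, rkImp (m := m) 0 0 0 1 (Equiv.swap a1 a2 z) = rkImp 0 0 0 1 z := by
    intro z
    by_cases h1 : z = a1
    · rw [h1, Equiv.swap_apply_left, rk_eval2 _ _ _ _ a2 hva2, rk_eval1 _ _ _ _ a1 hva1]
    · by_cases h2 : z = a2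
      · rw [h2, Equiv.swap_apply_right, rk_eval1 _ _ _ _ a1 hva1, rk_eval2 _ _ _ _ a2 hva2]
      · rw [Equiv.swap_apply_of_ne_of_ne h1 h2]
  have hrBC_inv : ∀ z : Fin m, rkImp (m := m) 0 2 2 1 (Equiv.swap a1 a2 z) = rkImp 0 2 2 1 z := by
    intro z
    by_cases h1 : z = a1
    · rw [h1, Equiv.swap_apply_left, rk_eval2 _ _ _ _ a2 hva2, rk_eval1 _ _ _ _ a1 hva1]
    · by_cases h2 : z = a2
      · rw [h2, Equiv.swap_apply_right, rk_eval1 _ _ _ _ a1 hva1, rk_eval2 _ _ _ _ a2 hva2]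
      · rw [Equiv.swap_apply_of_ne_of_ne h1 h2]
  have hcompF : (fun j x y => (PF (n := n) (m := m)) j ((Equiv.swap a1 a2).symm x)
      ((Equiv.swap a1 a2).symm y)) = fun i => PF ((Equiv.refl (Fin n)) i) := by
    funext j x y
    simp only [Equiv.symm_swap, Equiv.refl_apply]
    simp only [PF]
    split_ifs
    · show (rkImp 0 0 0 1 (Equiv.swap a1 a2 y) ≤ rkImp 0 0 0 1 (Equiv.swap a1 a2 x))
        = (rkImp 0 0 0 1 y ≤ rkImp 0 0 0 1 x)
      rw [hrD_inv, hrD_inv]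
    · show (rkImp 0 2 2 1 (Equiv.swap a1 a2 y) ≤ rkImp 0 2 2 1 (Equiv.swap a1 a2 x))
        = (rkImp 0 2 2 1 y ≤ rkImp 0 2 2 1 x)
      rw [hrBC_inv, hrBC_inv]
    · show (rkImp 0 0 0 0 (Equiv.swap a1 a2 y) ≤ rkImp 0 0 0 0 (Equiv.swap a1 a2 x))
        = (rkImp 0 0 0 0 y ≤ rkImp 0 0 0 0 x)
      rw [rk_ind, rk_ind, rk_ind, rk_ind]
  have hFsym : f (PF (n := n) (m := m)) a2 = f PF a1 := by
    have h := sym_eq f han hnu PF hvF (Equiv.swap a1 a2) (Equiv.refl (Fin n)) hcompF a1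
    rwa [Equiv.symm_swap, Equiv.swap_apply_left] at h
  -- === symmetry of PP1 under the 3-cycle ===
  have hτ1 : ∀ z : Fin m, ((Equiv.swap a1 a2).trans (Equiv.swap a2 a3)).symm z
      = Equiv.swap a1 a2 (Equiv.swap a2 a3 z) := by
    intro z; rw [Equiv.symm_trans_apply, Equiv.symm_swap, Equiv.symm_swap]
  have hτ1a1 : ((Equiv.swap a1 a2).trans (Equiv.swap a2 a3)).symm a1 = a2 := by
    rw [hτ1, Equiv.swap_apply_of_ne_of_ne hne12 hne13, Equiv.swap_apply_left]
  have hτ1a2 : ((Equiv.swap a1 a2).trans (Equiv.swap a2 a3)).symm a2 = a3 := by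
    rw [hτ1, Equiv.swap_apply_left, Equiv.swap_apply_of_ne_of_ne (Ne.symm hne13) (Ne.symm hne23)]
  have hτ1a3 : ((Equiv.swap a1 a2).trans (Equiv.swap a2 a3)).symm a3 = a1 := by
    rw [hτ1, Equiv.swap_apply_right, Equiv.swap_apply_right]
  have hτ1fix : ∀ z : Fin m, z ≠ a1 → z ≠ a2 → z ≠ a3 →
      ((Equiv.swap a1 a2).trans (Equiv.swap a2 a3)).symm z = z := by
    intro z h1 h2 h3
    rw [hτ1, Equiv.swap_apply_of_ne_of_ne h2 h3, Equiv.swap_apply_of_ne_of_ne h1 h2]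
  have hT1 : ∀ z : Fin m, rkImp (m := m) 0 1 2 2
      (((Equiv.swap a1 a2).trans (Equiv.swap a2 a3)).symm z) = rkImp 0 2 2 1 z := by
    intro z
    by_cases h1 : z = a1
    · rw [h1, hτ1a1, rk_eval2 _ _ _ _ a2 hva2, rk_eval1 _ _ _ _ a1 hva1]
    · by_cases h2 : z = a2
      · rw [h2, hτ1a2, rk_eval3 _ _ _ _ a3 hva3, rk_eval2 _ _ _ _ a2 hva2]
      · by_cases h3 : z = a3
        · rw [h3, hτ1a3, rk_eval1 _ _ _ _ a1 hva1, rk_eval3 _ _ _ _ a3 hva3]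
        · have hz1 : z.val ≠ 1 := fun h => h1 (Fin.ext (by omega))
          have hz2 : z.val ≠ 2 := fun h => h2 (Fin.ext (by omega))
          have hz3 : z.val ≠ 3 := fun h => h3 (Fin.ext (by omega))
          rw [hτ1fix z h1 h2 h3, rk_zero1 _ _ _ z hz1 hz2 hz3, rk_zero1 _ _ _ z hz1 hz2 hz3]
  have hT2 : ∀ z : Fin m, rkImp (m := m) 0 2 1 2
      (((Equiv.swap a1 a2).trans (Equiv.swap a2 a3)).symm z) = rkImp 0 1 2 2 z := by
    intro z
    by_cases h1 : z = a1
    · rw [h1, hτ1a1, rk_eval2 _ _ _ _ a2 hva2, rk_eval1 _ _ _ _ a1 hva1]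
    · by_cases h2 : z = a2
      · rw [h2, hτ1a2, rk_eval3 _ _ _ _ a3 hva3, rk_eval2 _ _ _ _ a2 hva2]
      · by_cases h3 : z = a3
        · rw [h3, hτ1a3, rk_eval1 _ _ _ _ a1 hva1, rk_eval3 _ _ _ _ a3 hva3]
        · have hz1 : z.val ≠ 1 := fun h => h1 (Fin.ext (by omega))
          have hz2 : z.val ≠ 2 := fun h => h2 (Fin.ext (by omega))
          have hz3 : z.val ≠ 3 := fun h => h3 (Fin.ext (by omega))
          rw [hτ1fix z h1 h2 h3, rk_zero1 _ _ _ z hz1 hz2 hz3, rk_zero1 _ _ _ z hz1 hz2 hz3]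
  have hT3 : ∀ z : Fin m, rkImp (m := m) 0 2 2 1
      (((Equiv.swap a1 a2).trans (Equiv.swap a2 a3)).symm z) = rkImp 0 2 1 2 z := by
    intro z
    by_cases h1 : z = a1
    · rw [h1, hτ1a1, rk_eval2 _ _ _ _ a2 hva2, rk_eval1 _ _ _ _ a1 hva1]
    · by_cases h2 : z = a2
      · rw [h2, hτ1a2, rk_eval3 _ _ _ _ a3 hva3, rk_eval2 _ _ _ _ a2 hva2]
      · by_cases h3 : z = a3
        · rw [h3, hτ1a3, rk_eval1 _ _ _ _ a1 hva1, rk_eval3 _ _ _ _ a3 hva3]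
        · have hz1 : z.val ≠ 1 := fun h => h1 (Fin.ext (by omega))
          have hz2 : z.val ≠ 2 := fun h => h2 (Fin.ext (by omega))
          have hz3 : z.val ≠ 3 := fun h => h3 (Fin.ext (by omega))
          rw [hτ1fix z h1 h2 h3, rk_zero1 _ _ _ z hz1 hz2 hz3, rk_zero1 _ _ _ z hz1 hz2 hz3]
  have hσ1i1 : ((Equiv.swap i1 i3).trans (Equiv.swap i1 i2)) i1 = i3 := by
    rw [Equiv.trans_apply, Equiv.swap_apply_left,
      Equiv.swap_apply_of_ne_of_ne (Ne.symm hni13) (Ne.symm hni23)]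
  have hσ1i2 : ((Equiv.swap i1 i3).trans (Equiv.swap i1 i2)) i2 = i1 := by
    rw [Equiv.trans_apply, Equiv.swap_apply_of_ne_of_ne (Ne.symm hni12) hni23,
      Equiv.swap_apply_right]
  have hσ1i3 : ((Equiv.swap i1 i3).trans (Equiv.swap i1 i2)) i3 = i2 := by
    rw [Equiv.trans_apply, Equiv.swap_apply_right, Equiv.swap_apply_left]
  have hσ1fix : ∀ j : Fin n, j ≠ i1 → j ≠ i2 → j ≠ i3 →
      ((Equiv.swap i1 i3).trans (Equiv.swap i1 i2)) j = j := by
    intro j h1 h2 h3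
    rw [Equiv.trans_apply, Equiv.swap_apply_of_ne_of_ne h1 h3, Equiv.swap_apply_of_ne_of_ne h1 h2]
  have hcomp1 : (fun j x y => (PP1 (n := n) (m := m)) j
        (((Equiv.swap a1 a2).trans (Equiv.swap a2 a3)).symm x)
        (((Equiv.swap a1 a2).trans (Equiv.swap a2 a3)).symm y))
      = fun i => PP1 (((Equiv.swap i1 i3).trans (Equiv.swap i1 i2)) i) := by
    funext j x y
    by_cases hj1 : j = i1
    · rw [hj1, hσ1i1, hPP1i1, hPP1i3]
      show (rkImp 0 1 2 2 (((Equiv.swap a1 a2).trans (Equiv.swap a2 a3)).symm y) ≤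
          rkImp 0 1 2 2 (((Equiv.swap a1 a2).trans (Equiv.swap a2 a3)).symm x))
        = (rkImp 0 2 2 1 y ≤ rkImp 0 2 2 1 x)
      rw [hT1 x, hT1 y]
    · by_cases hj2 : j = i2
      · rw [hj2, hσ1i2, hPP1i2, hPP1i1]
        show (rkImp 0 2 1 2 (((Equiv.swap a1 a2).trans (Equiv.swap a2 a3)).symm y) ≤
            rkImp 0 2 1 2 (((Equiv.swap a1 a2).trans (Equiv.swap a2 a3)).symm x))
          = (rkImp 0 1 2 2 y ≤ rkImp 0 1 2 2 x)
        rw [hT2 x, hT2 y]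
      · by_cases hj3 : j = i3
        · rw [hj3, hσ1i3, hPP1i3, hPP1i2]
          show (rkImp 0 2 2 1 (((Equiv.swap a1 a2).trans (Equiv.swap a2 a3)).symm y) ≤
              rkImp 0 2 2 1 (((Equiv.swap a1 a2).trans (Equiv.swap a2 a3)).symm x))
            = (rkImp 0 2 1 2 y ≤ rkImp 0 2 1 2 x)
          rw [hT3 x, hT3 y]
        · have hjv1 : j.val ≠ 1 := fun h => hj1 (Fin.ext (by omega))
          have hjv2 : j.val ≠ 2 := fun h => hj2 (Fin.ext (by omega))
          have hjv3 : j.val ≠ 3 := fun h => hj3 (Fin.ext (by omega))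
          have hPP1j : (PP1 (n := n) (m := m)) j = mkP (rkImp 0 0 0 0) := by
            simp only [PP1]; rw [if_neg hjv1, if_neg hjv2, if_neg hjv3]
          rw [hσ1fix j hj1 hj2 hj3, hPP1j]
          show (rkImp 0 0 0 0 (((Equiv.swap a1 a2).trans (Equiv.swap a2 a3)).symm y) ≤
              rkImp 0 0 0 0 (((Equiv.swap a1 a2).trans (Equiv.swap a2 a3)).symm x))
            = (rkImp 0 0 0 0 y ≤ rkImp 0 0 0 0 x)
          rw [rk_ind, rk_ind, rk_ind, rk_ind]
  have h1sa : f (PP1 (n := n) (m := m)) a2 = f PP1 a1 := by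
    have h := sym_eq f han hnu PP1 hv1p ((Equiv.swap a1 a2).trans (Equiv.swap a2 a3))
      ((Equiv.swap i1 i3).trans (Equiv.swap i1 i2)) hcomp1 a1
    rwa [hτ1a1] at h
  have h1sb : f (PP1 (n := n) (m := m)) a3 = f PP1 a2 := by
    have h := sym_eq f han hnu PP1 hv1p ((Equiv.swap a1 a2).trans (Equiv.swap a2 a3))
      ((Equiv.swap i1 i3).trans (Equiv.swap i1 i2)) hcomp1 a2
    rwa [hτ1a2] at h
  -- === symmetry of PP2 under (a0 a1)(a2 a3) ===
  have hτ2 : ∀ z : Fin m, ((Equiv.swap a0 a1).trans (Equiv.swap a2 a3)).symm z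
      = Equiv.swap a0 a1 (Equiv.swap a2 a3 z) := by
    intro z; rw [Equiv.symm_trans_apply, Equiv.symm_swap, Equiv.symm_swap]
  have hτ2a0 : ((Equiv.swap a0 a1).trans (Equiv.swap a2 a3)).symm a0 = a1 := by
    rw [hτ2, Equiv.swap_apply_of_ne_of_ne hne02 hne03, Equiv.swap_apply_left]
  have hτ2a1 : ((Equiv.swap a0 a1).trans (Equiv.swap a2 a3)).symm a1 = a0 := by
    rw [hτ2, Equiv.swap_apply_of_ne_of_ne hne12 hne13, Equiv.swap_apply_right]
  have hτ2a2 : ((Equiv.swap a0 a1).trans (Equiv.swap a2 a3)).symm a2 = a3 := by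
    rw [hτ2, Equiv.swap_apply_left, Equiv.swap_apply_of_ne_of_ne (Ne.symm hne03) (Ne.symm hne13)]
  have hτ2a3 : ((Equiv.swap a0 a1).trans (Equiv.swap a2 a3)).symm a3 = a2 := by
    rw [hτ2, Equiv.swap_apply_right, Equiv.swap_apply_of_ne_of_ne (Ne.symm hne02) (Ne.symm hne12)]
  have hτ2fix : ∀ z : Fin m, z ≠ a0 → z ≠ a1 → z ≠ a2 → z ≠ a3 →
      ((Equiv.swap a0 a1).trans (Equiv.swap a2 a3)).symm z = z := by
    intro z h0 h1 h2 h3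
    rw [hτ2, Equiv.swap_apply_of_ne_of_ne h2 h3, Equiv.swap_apply_of_ne_of_ne h0 h1]
  have hU1 : ∀ z : Fin m, rkImp (m := m) 2 0 1 2
      (((Equiv.swap a0 a1).trans (Equiv.swap a2 a3)).symm z) = rkImp 0 2 2 1 z := by
    intro z
    by_cases h0 : z = a0
    · rw [h0, hτ2a0, rk_eval1 _ _ _ _ a1 hva1, rk_eval0 _ _ _ _ a0 hva0]
    · by_cases h1 : z = a1
      · rw [h1, hτ2a1, rk_eval0 _ _ _ _ a0 hva0, rk_eval1 _ _ _ _ a1 hva1]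
      · by_cases h2 : z = a2
        · rw [h2, hτ2a2, rk_eval3 _ _ _ _ a3 hva3, rk_eval2 _ _ _ _ a2 hva2]
        · by_cases h3 : z = a3
          · rw [h3, hτ2a3, rk_eval2 _ _ _ _ a2 hva2, rk_eval3 _ _ _ _ a3 hva3]
          · have hz4 : 4 ≤ z.val := by
              have hz0 : z.val ≠ 0 := fun h => h0 (Fin.ext (by omega))
              have hz1 : z.val ≠ 1 := fun h => h1 (Fin.ext (by omega))
              have hz2 : z.val ≠ 2 := fun h => h2 (Fin.ext (by omega))
              have hz3 : z.val ≠ 3 := fun h => h3 (Fin.ext (by omega))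
              omega
            rw [hτ2fix z h0 h1 h2 h3, rk_hi _ _ _ _ z hz4, rk_hi _ _ _ _ z hz4]
  have hU2 : ∀ z : Fin m, rkImp (m := m) 0 2 2 1
      (((Equiv.swap a0 a1).trans (Equiv.swap a2 a3)).symm z) = rkImp 2 0 1 2 z := by
    intro z
    by_cases h0 : z = a0
    · rw [h0, hτ2a0, rk_eval1 _ _ _ _ a1 hva1, rk_eval0 _ _ _ _ a0 hva0]
    · by_cases h1 : z = a1
      · rw [h1, hτ2a1, rk_eval0 _ _ _ _ a0 hva0, rk_eval1 _ _ _ _ a1 hva1]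
      · by_cases h2 : z = a2
        · rw [h2, hτ2a2, rk_eval3 _ _ _ _ a3 hva3, rk_eval2 _ _ _ _ a2 hva2]
        · by_cases h3 : z = a3
          · rw [h3, hτ2a3, rk_eval2 _ _ _ _ a2 hva2, rk_eval3 _ _ _ _ a3 hva3]
          · have hz4 : 4 ≤ z.val := by
              have hz0 : z.val ≠ 0 := fun h => h0 (Fin.ext (by omega))
              have hz1 : z.val ≠ 1 := fun h => h1 (Fin.ext (by omega))
              have hz2 : z.val ≠ 2 := fun h => h2 (Fin.ext (by omega))
              have hz3 : z.val ≠ 3 := fun h => h3 (Fin.ext (by omega))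
              omega
            rw [hτ2fix z h0 h1 h2 h3, rk_hi _ _ _ _ z hz4, rk_hi _ _ _ _ z hz4]
  have hcomp2 : (fun j x y => (PP2 (n := n) (m := m)) j
        (((Equiv.swap a0 a1).trans (Equiv.swap a2 a3)).symm x)
        (((Equiv.swap a0 a1).trans (Equiv.swap a2 a3)).symm y))
      = fun i => PP2 ((Equiv.swap i2 i3) i) := by
    funext j x y
    by_cases hj2 : j = i2
    · rw [hj2, Equiv.swap_apply_left, hPP2i2, hPP2i3]
      show (rkImp 2 0 1 2 (((Equiv.swap a0 a1).trans (Equiv.swap a2 a3)).symm y) ≤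
          rkImp 2 0 1 2 (((Equiv.swap a0 a1).trans (Equiv.swap a2 a3)).symm x))
        = (rkImp 0 2 2 1 y ≤ rkImp 0 2 2 1 x)
      rw [hU1 x, hU1 y]
    · by_cases hj3 : j = i3
      · rw [hj3, Equiv.swap_apply_right, hPP2i3, hPP2i2]
        show (rkImp 0 2 2 1 (((Equiv.swap a0 a1).trans (Equiv.swap a2 a3)).symm y) ≤
            rkImp 0 2 2 1 (((Equiv.swap a0 a1).trans (Equiv.swap a2 a3)).symm x))
          = (rkImp 2 0 1 2 y ≤ rkImp 2 0 1 2 x)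
        rw [hU2 x, hU2 y]
      · have hjv2 : j.val ≠ 2 := fun h => hj2 (Fin.ext (by omega))
        have hjv3 : j.val ≠ 3 := fun h => hj3 (Fin.ext (by omega))
        have hPP2j : (PP2 (n := n) (m := m)) j = mkP (rkImp 0 0 0 0) := by
          simp only [PP2]; rw [if_neg hjv2, if_neg hjv3]
        rw [Equiv.swap_apply_of_ne_of_ne hj2 hj3, hPP2j]
        show (rkImp 0 0 0 0 (((Equiv.swap a0 a1).trans (Equiv.swap a2 a3)).symm y) ≤
            rkImp 0 0 0 0 (((Equiv.swap a0 a1).trans (Equiv.swap a2 a3)).symm x))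
          = (rkImp 0 0 0 0 y ≤ rkImp 0 0 0 0 x)
        rw [rk_ind, rk_ind, rk_ind, rk_ind]
  have h2s : f (PP2 (n := n) (m := m)) a3 = f PP2 a2 := by
    have h := sym_eq f han hnu PP2 hv2p ((Equiv.swap a0 a1).trans (Equiv.swap a2 a3))
      (Equiv.swap i2 i3) hcomp2 a2
    rwa [hτ2a2] at h
  -- handy zero facts
  have hF0 : f (PF (n := n) (m := m)) a0 = 0 := hzF a0 (by omega) (by omega) (by omega)
  have h10 : f (PP1 (n := n) (m := m)) a0 = 0 := hz1 a0 (by omega) (by omega) (by omega)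
  have h20 : f (PP2 (n := n) (m := m)) a0 = 0 := hz2 a0 (by omega) (by omega)
  have h21 : f (PP2 (n := n) (m := m)) a1 = 0 := hz2 a1 (by omega) (by omega)
  -- rank value tables
  have hD0 : rkImp (m := m) 0 0 0 1 a0 = 0 := rk_eval0 _ _ _ _ a0 hva0
  have hD1 : rkImp (m := m) 0 0 0 1 a1 = 0 := rk_eval1 _ _ _ _ a1 hva1
  have hD2 : rkImp (m := m) 0 0 0 1 a2 = 0 := rk_eval2 _ _ _ _ a2 hva2
  have hD3 : rkImp (m := m) 0 0 0 1 a3 = 1 := rk_eval3 _ _ _ _ a3 hva3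
  have hC0 : rkImp (m := m) 0 1 2 2 a0 = 0 := rk_eval0 _ _ _ _ a0 hva0
  have hC1 : rkImp (m := m) 0 1 2 2 a1 = 1 := rk_eval1 _ _ _ _ a1 hva1
  have hC2 : rkImp (m := m) 0 1 2 2 a2 = 2 := rk_eval2 _ _ _ _ a2 hva2
  have hC3 : rkImp (m := m) 0 1 2 2 a3 = 2 := rk_eval3 _ _ _ _ a3 hva3
  have hB0 : rkImp (m := m) 0 2 1 2 a0 = 0 := rk_eval0 _ _ _ _ a0 hva0
  have hB1 : rkImp (m := m) 0 2 1 2 a1 = 2 := rk_eval1 _ _ _ _ a1 hva1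
  have hB2 : rkImp (m := m) 0 2 1 2 a2 = 1 := rk_eval2 _ _ _ _ a2 hva2
  have hB3 : rkImp (m := m) 0 2 1 2 a3 = 2 := rk_eval3 _ _ _ _ a3 hva3
  -- === SP arrow 2 : at true profile F, agent i2 deviates to PP2 ===
  have harr2 : ¬ (f (PF (n := n) (m := m)) a3 < 1/2) := by
    intro hlt
    apply hsp
    refine ⟨PF, PP2, {i2}, hvF, ⟨i2, Finset.mem_singleton_self i2⟩, ?_, ?_, ?_⟩
    · intro i _; exact hv2p i
    · intro i hi
      rw [Finset.mem_singleton] at hi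
      have hv2' : i.val ≠ 2 := fun h => hi (Fin.ext (by omega))
      simp only [PF, PP2]
      rw [if_neg hv2', if_neg hv2']
    · intro i hi
      rw [Finset.mem_singleton] at hi
      rw [hi, hPFi2]
      constructor
      · refine sd_mk a0 a1 a2 a3 hva0 hva1 hva2 hva3 (rkImp 0 0 0 1)
          (fun b hb => rk_hi _ _ _ _ b hb) hD0 (f PP2) (f PF) hz42 hz4F hl2.2 hlF.2 ?_ ?_ ?_
        · simp only [mkP, hD0, hD1, hD2, hD3]
          norm_num
          linarith [ht2, htF]
        · simp only [mkP, hD0, hD1, hD2, hD3]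
          norm_num
          linarith [ht2, htF]
        · simp only [mkP, hD0, hD1, hD2, hD3]
          norm_num
          linarith [ht2, h20, h21, h2s]
      · refine not_sd_mk a0 a1 a2 a3 hva0 hva1 hva2 hva3 (rkImp 0 0 0 1) a3
          (f PF) (f PP2) hz4F hz42 ?_
        simp only [mkP, hD0, hD1, hD2, hD3]
        norm_num
        linarith [ht2, h20, h21, h2s]
  -- === SP arrow 1 : at true profile PP1, agents i1, i2 deviate to F ===
  have harr1 : ¬ (f (PF (n := n) (m := m)) a1 < 1/3) := by
    intro hlt
    apply hsp
    refine ⟨PP1, PF, {i1, i2}, hv1p, ⟨i1, Finset.mem_insert_self i1 _⟩, ?_, ?_, ?_⟩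
    · intro i _; exact hvF i
    · intro i hi
      simp only [Finset.mem_insert, Finset.mem_singleton, not_or] at hi
      obtain ⟨hne1, hne2⟩ := hi
      have hv1' : i.val ≠ 1 := fun h => hne1 (Fin.ext (by omega))
      have hv2' : i.val ≠ 2 := fun h => hne2 (Fin.ext (by omega))
      simp only [PF, PP1]
      rw [if_neg hv2', if_neg hv1', if_neg hv2']
    · intro i hi
      rw [Finset.mem_insert, Finset.mem_singleton] at hi
      rcases hi with hi | hi
      · rw [hi, hPP1i1]
        constructor
        · refine sd_mk a0 a1 a2 a3 hva0 hva1 hva2 hva3 (rkImp 0 1 2 2)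
            (fun b hb => rk_hi _ _ _ _ b hb) hC0 (f PF) (f PP1) hz4F hz41 hlF.2 hl1.2 ?_ ?_ ?_
          · simp only [mkP, hC0, hC1, hC2, hC3]
            norm_num
            linarith [htF, hF0, ht1, h10]
          · simp only [mkP, hC0, hC1, hC2, hC3]
            norm_num
            linarith [htF, hF0, hFsym, ht1, h10, h1sa, h1sb, hlt]
          · simp only [mkP, hC0, hC1, hC2, hC3]
            norm_num
            linarith [htF, hF0, hFsym, ht1, h10, h1sa, h1sb, hlt]
        · refine not_sd_mk a0 a1 a2 a3 hva0 hva1 hva2 hva3 (rkImp 0 1 2 2) a2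
            (f PP1) (f PF) hz41 hz4F ?_
          simp only [mkP, hC0, hC1, hC2, hC3]
          norm_num
          linarith [htF, hF0, hFsym, ht1, h10, h1sa, h1sb, hlt]
      · rw [hi, hPP1i2]
        constructor
        · refine sd_mk a0 a1 a2 a3 hva0 hva1 hva2 hva3 (rkImp 0 2 1 2)
            (fun b hb => rk_hi _ _ _ _ b hb) hB0 (f PF) (f PP1) hz4F hz41 hlF.2 hl1.2 ?_ ?_ ?_
          · simp only [mkP, hB0, hB1, hB2, hB3]
            norm_num
            linarith [htF, hF0, hFsym, ht1, h10, h1sa, h1sb, hlt]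
          · simp only [mkP, hB0, hB1, hB2, hB3]
            norm_num
            linarith [htF, hF0, ht1, h10]
          · simp only [mkP, hB0, hB1, hB2, hB3]
            norm_num
            linarith [htF, hF0, hFsym, ht1, h10, h1sa, h1sb, hlt]
        · refine not_sd_mk a0 a1 a2 a3 hva0 hva1 hva2 hva3 (rkImp 0 2 1 2) a1
            (f PP1) (f PF) hz41 hz4F ?_
          simp only [mkP, hB0, hB1, hB2, hB3]
          norm_num
          linarith [htF, hF0, hFsym, ht1, h10, h1sa, h1sb, hlt]
  push_neg at harr1 harr2
  linarith [harr1, harr2, htF, hF0, hFsym]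
end

section
/- Ex post efficiency implies unanimity: if a preference profile admits a perfect assignment p, then every ex post efficient random assignment for that profile equals p. Consequently, every ex post efficient assignment rule satisfies unanimity. -/
open Finset
open scoped Classical

/-- A (binary-relation) preference over `m` objects; `R a b` means `a ≿ b`. -/
abbrev Pref (m : ℕ) := Fin m → Fin m → Prop

/-- A strict (linear) preference: reflexive, transitive, antisymmetric and total
weak relation `≿`, i.e. a linear order on the objects. -/
def IsStrictPref {m : ℕ} (R : Pref m) : Prop :=
  (∀ a, R a a) ∧ (∀ a b c, R a b → R b c → R a c) ∧
  (∀ a b, R a b → R b a → a = b) ∧ (∀ a b, R a b ∨ R b a)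

/-- A profile of strict preferences, one for each agent. -/
def ValidProfile {n m : ℕ} (pref : Fin n → Pref m) : Prop :=
  ∀ i, IsStrictPref (pref i)

/-- `x` (first-order) stochastically dominates `y` w.r.t. preference `R`:
for every object `o`, the total mass on objects weakly preferred to `o`
under `x` is at least that under `y`. -/
def sdPrefers {m : ℕ} (R : Pref m) (x y : Fin m → ℝ) : Prop :=
  ∀ o : Fin m,
    ∑ o' ∈ univ.filter (fun o' => R o' o), x o' ≥
    ∑ o' ∈ univ.filter (fun o' => R o' o), y o'

/-- Strict stochastic dominance. -/
def sdStrict {m : ℕ} (R : Pref m) (x y : Fin m → ℝ) : Prop :=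
  sdPrefers R x y ∧ ¬ sdPrefers R y x

/-- Strict downward-lexicographic (DL) preference of `x` over `y`:
at the most preferred object where they differ, `x` gives more. -/
def dlStrict {m : ℕ} (R : Pref m) (x y : Fin m → ℝ) : Prop :=
  ∃ o : Fin m, x o > y o ∧ ∀ o', x o' ≠ y o' → R o o'

/-- Weak DL preference. -/
def dlPrefers {m : ℕ} (R : Pref m) (x y : Fin m → ℝ) : Prop :=
  x = y ∨ dlStrict R x y

/-- A random assignment: entries in `[0,1]`, every object fully allocated
(column sums `1`), every agent receiving `c` units (row sums `c`). -/
def IsRandomAssignment (n m c : ℕ) (p : Fin n → Fin m → ℝ) : Prop :=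
  (∀ i o, 0 ≤ p i o ∧ p i o ≤ 1) ∧
  (∀ o, ∑ i, p i o = 1) ∧
  (∀ i, ∑ o, p i o = (c : ℝ))

/-- A discrete (0/1) matrix. -/
def IsDiscreteMatrix (n m : ℕ) (p : Fin n → Fin m → ℝ) : Prop :=
  ∀ i o, p i o = 0 ∨ p i o = 1

/-- `p` is SD-efficient at profile `pref`: no random assignment `q` weakly
SD-dominates it for everyone and strictly for someone. -/
def SDEfficientAssignment (n m c : ℕ) (pref : Fin n → Pref m)
    (p : Fin n → Fin m → ℝ) : Prop :=
  ¬ ∃ q : Fin n → Fin m → ℝ, IsRandomAssignment n m c q ∧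
      (∀ i, sdPrefers (pref i) (q i) (p i)) ∧
      ∃ j, sdStrict (pref j) (q j) (p j)

/-- Anonymity of an assignment rule: permuting the agents' reports permutes
their allocations accordingly. -/
def Anonymous (n m : ℕ) (f : (Fin n → Pref m) → Fin n → Fin m → ℝ) : Prop :=
  ∀ (pref : Fin n → Pref m) (σ : Equiv.Perm (Fin n)), ValidProfile pref →
    ∀ i, f (fun j => pref (σ j)) i = f pref (σ i)

/-- Neutrality of an assignment rule: relabelling the objects (in all
preferences) relabels the returned assignment accordingly. -/
def Neutral (n m : ℕ) (f : (Fin n → Pref m) → Fin n → Fin m → ℝ) : Prop :=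
  ∀ (pref : Fin n → Pref m) (τ : Equiv.Perm (Fin m)), ValidProfile pref →
    ∀ i o, f (fun j a b => pref j (τ.symm a) (τ.symm b)) i o = f pref i (τ.symm o)

/-- Weak SD-strategyproofness: no agent can misreport and obtain an allocation
he strictly SD-prefers (w.r.t. his true preference). -/
def WeakSDSP (n m : ℕ) (f : (Fin n → Pref m) → Fin n → Fin m → ℝ) : Prop :=
  ¬ ∃ (pref : Fin n → Pref m) (i : Fin n) (R' : Pref m),
      ValidProfile pref ∧ IsStrictPref R' ∧
      sdStrict (pref i) (f (Function.update pref i R') i) (f pref i)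

/-- Weak SD group-strategyproofness: no nonempty coalition can jointly
misreport so that every member strictly SD-prefers the new allocation. -/
def WeakSDGroupSP (n m : ℕ) (f : (Fin n → Pref m) → Fin n → Fin m → ℝ) : Prop :=
  ¬ ∃ (pref pref' : Fin n → Pref m) (S : Finset (Fin n)),
      ValidProfile pref ∧ S.Nonempty ∧
      (∀ i ∈ S, IsStrictPref (pref' i)) ∧
      (∀ i ∉ S, pref' i = pref i) ∧
      ∀ i ∈ S, sdStrict (pref i) (f pref' i) (f pref i)

/-- DL-strategyproofness: truth-telling always yields a weakly DL-preferred
allocation. -/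
def DLSP (n m : ℕ) (f : (Fin n → Pref m) → Fin n → Fin m → ℝ) : Prop :=
  ∀ (pref : Fin n → Pref m) (i : Fin n) (R' : Pref m),
    ValidProfile pref → IsStrictPref R' →
    dlPrefers (pref i) (f pref i) (f (Function.update pref i R') i)

/-- The set of the `c` most preferred objects under the strict preference `R`:
objects having at most `c` objects weakly preferred to them. -/
noncomputable def topSet (m c : ℕ) (R : Pref m) : Finset (Fin m) :=
  univ.filter (fun o => (univ.filter (fun o' => R o' o)).card ≤ c)

/-- A perfect assignment: every agent receives each of his `c` most preferred
objects with probability `1`. -/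
def PerfectAssignment (n m c : ℕ) (pref : Fin n → Pref m) (p : Fin n → Fin m → ℝ) : Prop :=
  ∀ i, ∀ o ∈ topSet m c (pref i), p i o = 1

/-- Ex post efficiency: `p` is a convex combination of SD-efficient discrete
assignments. -/
def ExPostEfficient (n m c : ℕ) (pref : Fin n → Pref m)
    (p : Fin n → Fin m → ℝ) : Prop :=
  ∃ (k : ℕ) (w : Fin k → ℝ) (d : Fin k → Fin n → Fin m → ℝ),
    (∀ j, 0 ≤ w j) ∧ (∑ j, w j = 1) ∧
    (∀ j, IsDiscreteMatrix n m (d j) ∧ IsRandomAssignment n m c (d j) ∧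
          SDEfficientAssignment n m c pref (d j)) ∧
    (∀ i o, p i o = ∑ j, w j * d j i o)

/-- A (possibly unbalanced) 0/1 allocation matrix: 0/1 entries, every object
assigned to exactly one agent. -/
def ZeroOneAlloc (n m : ℕ) (p : Fin n → Fin m → ℝ) : Prop :=
  (∀ i o, p i o = 0 ∨ p i o = 1) ∧ (∀ o, ∑ i, p i o = 1)

/-- Pareto optimality among 0/1 allocation matrices (w.r.t. SD comparisons). -/
def ParetoOptAlloc (n m : ℕ) (pref : Fin n → Pref m)
    (p : Fin n → Fin m → ℝ) : Prop :=
  ZeroOneAlloc n m p ∧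
  ¬ ∃ q : Fin n → Fin m → ℝ, ZeroOneAlloc n m q ∧
      (∀ i, sdPrefers (pref i) (q i) (p i)) ∧
      ∃ j, sdStrict (pref j) (q j) (p j)

/-- `p` is the outcome of the priority (serial dictator) rule for the agent
ordering `σ`: it is a discrete assignment in which, sequentially, agent
`σ k` receives his `c` most preferred objects among those not taken by the
earlier agents `σ 0, …, σ (k-1)`. -/
def PriorityOutcome (n m c : ℕ) (pref : Fin n → Pref m) (σ : Equiv.Perm (Fin n))
    (p : Fin n → Fin m → ℝ) : Prop :=
  IsDiscreteMatrix n m p ∧ IsRandomAssignment n m c p ∧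
  ∀ (k : Fin n) (o : Fin m), (∀ j, j < k → p (σ j) o ≠ 1) →
    (p (σ k) o = 1 ↔
      (univ.filter (fun o' => (∀ j, j < k → p (σ j) o' ≠ 1) ∧ pref (σ k) o' o)).card ≤ c)

/-- The strict preference induced by a ranking function (smaller rank =
more preferred). -/
def prefOfRank {m : ℕ} (r : Fin m → ℕ) : Pref m := fun a b => r a ≤ r b

/-!
A perfect row is the indicator of the agent's top `c` objects, and such a row SD-dominates
every row with entries in `[0, 1]` summing to `c`: an upper contour set either lies inside the
top set, where the perfect row has mass `1` everywhere, or contains the whole top set, where the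
perfect row already has all its `c` units. Since SD-dominance is antisymmetric for strict
preferences, every random assignment other than the perfect one is weakly SD-dominated by it for
all agents and strictly for some agent. So the perfect assignment is the only SD-efficient one,
and every convex combination of SD-efficient assignments equals it.
-/

noncomputable def upperContour {m : ℕ} (R : Pref m) (o : Fin m) : Finset (Fin m) :=
  univ.filter (fun o' => R o' o)

section StrictPref

variable {m : ℕ} {R : Pref m}

theorem mem_upperContour {a o : Fin m} : a ∈ upperContour R o ↔ R a o := by
  simp [upperContour]

theorem upperContour_subset_iff (hR : IsStrictPref R) {a b : Fin m} :
    upperContour R a ⊆ upperContour R b ↔ R a b := by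
  obtain ⟨hrefl, htrans, -, -⟩ := hR
  refine ⟨fun h => mem_upperContour.1 (h (mem_upperContour.2 (hrefl a))), fun hab o ho => ?_⟩
  exact mem_upperContour.2 (htrans _ _ _ (mem_upperContour.1 ho) hab)

theorem upperContour_ssubset (hR : IsStrictPref R) {a b : Fin m} (hab : R a b) (hne : a ≠ b) :
    upperContour R a ⊂ upperContour R b := by
  refine ssubset_of_subset_of_ne ((upperContour_subset_iff hR).2 hab) fun h => hne ?_
  exact hR.2.2.1 a b hab ((upperContour_subset_iff hR).1 h.ge)

theorem card_upperContour_injective (hR : IsStrictPref R) :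
    Function.Injective (fun o => #(upperContour R o)) := by
  intro a b hab
  by_contra hne
  rcases hR.2.2.2 a b with h | h
  · exact (card_lt_card (upperContour_ssubset hR h hne)).ne hab
  · exact (card_lt_card (upperContour_ssubset hR h (Ne.symm hne))).ne' hab

theorem sdPrefers_antisymm (hR : IsStrictPref R) {x y : Fin m → ℝ}
    (hxy : sdPrefers R x y) (hyx : sdPrefers R y x) : x = y := by
  funext o
  -- `x o` is the sum over `upperContour R o` minus the sum over the strictly better objects,
  -- whose upper contour sets are strictly smaller.
  induction hk : #(upperContour R o) using Nat.strong_induction_on generalizing o with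
  | _ k ih =>
    have hoU : o ∈ upperContour R o := mem_upperContour.2 (hR.1 o)
    have hsum : ∑ o' ∈ upperContour R o, x o' = ∑ o' ∈ upperContour R o, y o' :=
      le_antisymm (hyx o) (hxy o)
    have herase : ∑ o' ∈ (upperContour R o).erase o, x o' =
        ∑ o' ∈ (upperContour R o).erase o, y o' := by
      refine sum_congr rfl fun o' ho' => ?_
      obtain ⟨hne, hmem⟩ := mem_erase.1 ho'
      have hlt := card_lt_card (upperContour_ssubset hR (mem_upperContour.1 hmem) hne)
      exact ih _ (hk ▸ hlt) o' rfl
    linarith [sum_erase_add _ x hoU, sum_erase_add _ y hoU]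

theorem card_topSet (hR : IsStrictPref R) {c : ℕ} (hc : c ≤ m) : #(topSet m c R) = c := by
  have hinj := card_upperContour_injective hR
  have himage : univ.image (fun o => #(upperContour R o)) = Icc 1 m := by
    refine eq_of_subset_of_card_le (fun k hk => ?_) (by simp [card_image_of_injective _ hinj])
    obtain ⟨o, -, rfl⟩ := mem_image.1 hk
    exact mem_Icc.2 ⟨card_pos.2 ⟨o, mem_upperContour.2 (hR.1 o)⟩,
      (card_le_univ _).trans_eq (Fintype.card_fin m)⟩
  calc #(topSet m c R) = #((topSet m c R).image fun o => #(upperContour R o)) :=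
        (card_image_of_injective _ hinj).symm
    _ = #((Icc 1 m).filter (· ≤ c)) := by
        rw [← himage, filter_image]
        rfl
    _ = c := by
        rw [show (Icc 1 m).filter (· ≤ c) = Icc 1 c by ext; simp; omega]
        simp

theorem le_of_sum_eq_of_le_one {c : ℕ} {y : Fin m → ℝ} (hy1 : ∀ o, y o ≤ 1)
    (hysum : ∑ o, y o = c) : c ≤ m := by
  have : (c : ℝ) ≤ m := by
    simpa [← hysum] using sum_le_sum fun o (_ : o ∈ univ) => hy1 o
  exact_mod_cast this

theorem eq_zero_of_notMem_topSet (hR : IsStrictPref R) {c : ℕ} (hc : c ≤ m)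
    {x : Fin m → ℝ} (hx0 : ∀ o, 0 ≤ x o) (hxsum : ∑ o, x o = c)
    (hxtop : ∀ o ∈ topSet m c R, x o = 1) : ∀ o ∉ topSet m c R, x o = 0 := by
  have htop : ∑ o ∈ topSet m c R, x o = c := by
    rw [sum_congr rfl hxtop, sum_const, card_topSet hR hc, nsmul_one]
  have hrest : ∑ o ∈ univ \ topSet m c R, x o = 0 := by
    linarith [sum_sdiff (f := x) (subset_univ (topSet m c R))]
  intro o ho
  exact (sum_eq_zero_iff_of_nonneg fun o _ => hx0 o).1 hrest o (mem_sdiff.2 ⟨mem_univ o, ho⟩)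

theorem sdPrefers_of_perfect (hR : IsStrictPref R) {c : ℕ} {x y : Fin m → ℝ}
    (hx0 : ∀ o, 0 ≤ x o) (hxsum : ∑ o, x o = c) (hxtop : ∀ o ∈ topSet m c R, x o = 1)
    (hy0 : ∀ o, 0 ≤ y o) (hy1 : ∀ o, y o ≤ 1) (hysum : ∑ o, y o = c) :
    sdPrefers R x y := by
  have hxout := eq_zero_of_notMem_topSet hR (le_of_sum_eq_of_le_one hy1 hysum) hx0 hxsum hxtop
  have mem_topSet : ∀ o, o ∈ topSet m c R ↔ #(upperContour R o) ≤ c := by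
    simp [topSet, upperContour]
  intro o
  change ∑ o' ∈ upperContour R o, y o' ≤ ∑ o' ∈ upperContour R o, x o'
  by_cases ho : o ∈ topSet m c R
  · have hsub : ∀ o' ∈ upperContour R o, o' ∈ topSet m c R := fun o' ho' =>
      (mem_topSet o').2 <| (card_le_card ((upperContour_subset_iff hR).2
        (mem_upperContour.1 ho'))).trans ((mem_topSet o).1 ho)
    calc ∑ o' ∈ upperContour R o, y o' ≤ ∑ _o' ∈ upperContour R o, (1 : ℝ) :=
          sum_le_sum fun o' _ => hy1 o'
      _ = ∑ o' ∈ upperContour R o, x o' :=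
          sum_congr rfl fun o' ho' => (hxtop o' (hsub o' ho')).symm
  · have hsup : ∀ o' ∉ upperContour R o, x o' = 0 := by
      refine fun o' ho' => hxout o' fun htop => ho ((mem_topSet o).2 ?_)
      have hle := (upperContour_subset_iff hR).2
        ((hR.2.2.2 o' o).resolve_left (mt mem_upperContour.2 ho'))
      exact (card_le_card hle).trans ((mem_topSet o').1 htop)
    calc ∑ o' ∈ upperContour R o, y o' ≤ ∑ o', y o' :=
          sum_le_sum_of_subset_of_nonneg (subset_univ _) fun o' _ _ => hy0 o'
      _ = ∑ o', x o' := by rw [hysum, hxsum]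
      _ = ∑ o' ∈ upperContour R o, x o' :=
          (sum_subset (subset_univ _) fun o' _ ho' => hsup o' ho').symm

end StrictPref

theorem eq_perfect_of_sdEfficient {n m c : ℕ} {pref : Fin n → Pref m}
    {p d : Fin n → Fin m → ℝ} (hpref : ValidProfile pref) (hp : IsRandomAssignment n m c p)
    (hperf : PerfectAssignment n m c pref p) (hd : IsRandomAssignment n m c d)
    (heff : SDEfficientAssignment n m c pref d) : d = p := by
  have hdom : ∀ i, sdPrefers (pref i) (p i) (d i) := fun i =>
    sdPrefers_of_perfect (hpref i) (fun o => (hp.1 i o).1) (hp.2.2 i) (hperf i)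
      (fun o => (hd.1 i o).1) (fun o => (hd.1 i o).2) (hd.2.2 i)
  by_contra hne
  obtain ⟨i, hi⟩ := Function.ne_iff.1 hne
  exact heff ⟨p, hp, hdom, i, hdom i,
    fun h => hi (sdPrefers_antisymm (hpref i) (hdom i) h).symm⟩

theorem eq_perfect_of_exPostEfficient {n m c : ℕ} {pref : Fin n → Pref m}
    {p q : Fin n → Fin m → ℝ} (hpref : ValidProfile pref) (hp : IsRandomAssignment n m c p)
    (hperf : PerfectAssignment n m c pref p) (hq : ExPostEfficient n m c pref q) : q = p := by
  obtain ⟨k, w, d, -, hw, hd, hqd⟩ := hq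
  have hdp : ∀ j, d j = p := fun j =>
    eq_perfect_of_sdEfficient hpref hp hperf (hd j).2.1 (hd j).2.2
  funext i o
  simp only [hqd, hdp, ← sum_mul, hw, one_mul]

/-- Ex post efficiency implies unanimity: if a profile admits
a perfect assignment `p`, every ex post efficient random assignment for that
profile equals `p`; consequently every ex post efficient assignment rule
satisfies unanimity. -/
theorem expost_implies_unanimity (n c : ℕ) :
    (∀ (pref : Fin n → Pref (n * c)) (p q : Fin n → Fin (n * c) → ℝ),
        ValidProfile pref →
        IsRandomAssignment n (n * c) c p → PerfectAssignment n (n * c) c pref p →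
        IsRandomAssignment n (n * c) c q → ExPostEfficient n (n * c) c pref q →
        q = p) ∧
    (∀ f : (Fin n → Pref (n * c)) → Fin n → Fin (n * c) → ℝ,
        (∀ pref, ValidProfile pref →
            IsRandomAssignment n (n * c) c (f pref) ∧
            ExPostEfficient n (n * c) c pref (f pref)) →
        ∀ (pref : Fin n → Pref (n * c)) (p : Fin n → Fin (n * c) → ℝ),
          ValidProfile pref →
          IsRandomAssignment n (n * c) c p → PerfectAssignment n (n * c) c pref p →
          f pref = p) := by
  refine ⟨fun pref p q hpref hp hperf _ hq => eq_perfect_of_exPostEfficient hpref hp hperf hq,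
    fun f hf pref p hpref hp hperf => ?_⟩
  exact eq_perfect_of_exPostEfficient hpref hp hperf (hf pref hpref).2
end

section
/- Let n = 4, m = 4 objects O = {a, b, c, d}, and c = 1, and let f be an anonymous, neutral, SD-efficient assignment rule. At the profile where agents 1 and 2 both report a ≻ b ≻ c ≻ d and agents 3 and 4 both report b ≻ a ≻ c ≻ d, f must return the random assignment in which agents 1 and 2 each receive a with probability 1/2, b with probability 0, and c and d each with probability 1/4, while agents 3 and 4 each receive b with probability 1/2, a with probability 0, and c and d each with probability 1/4. -/
open Finset
open scoped Classical

/-! Anonymity makes the two agents of each type receive the same allocation, and neutrality for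
the relabelling `a ↔ b`, which turns the profile into itself with the two types exchanged, makes
the second type's allocation the first one's with `a` and `b` swapped. The column sums then pin
`c` and `d` at `1/4` and leave one parameter `t`, the probability that an `a`-first agent
receives `b`. Moving that mass from `b` to `a` for the `a`-first agents, and from `a` to `b`
for the others, is an SD-improvement for everyone, so efficiency forces `t = 0`. -/

lemma isStrictPref_prefOfRank {m : ℕ} {r : Fin m → ℕ} (hr : Function.Injective r) :
    IsStrictPref (prefOfRank r) :=
  ⟨fun _ => le_rfl, fun _ _ _ => le_trans, fun _ _ h h' => hr (le_antisymm h h'),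
    fun a b => le_total (r a) (r b)⟩

lemma sdPrefers_add_smul_single_sub_single {m : ℕ} {R : Pref m}
    (hR : ∀ a b c, R a b → R b c → R a c) {u v : Fin m} (huv : R u v) {t : ℝ} (ht : 0 ≤ t)
    (y : Fin m → ℝ) :
    sdPrefers R (y + t • (Pi.single u 1 - Pi.single v 1)) y := by
  intro o
  have hshift : 0 ≤ ∑ o' ∈ univ.filter (fun o' => R o' o),
      t * ((Pi.single u 1 : Fin m → ℝ) o' - (Pi.single v 1 : Fin m → ℝ) o') := by
    rw [← mul_sum, sum_sub_distrib, sum_pi_single', sum_pi_single']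
    by_cases hvo : R v o
    · simp [hvo, hR u v o huv hvo]
    · by_cases huo : R u o <;> simp [hvo, huo, ht]
  simpa [sum_add_distrib] using hshift

lemma sdPrefers.apply_le_apply_of_top {m : ℕ} {R : Pref m}
    (hR : ∀ a b, R a b → R b a → a = b) {a : Fin m} (ha : ∀ o, R a o) {x y : Fin m → ℝ}
    (h : sdPrefers R x y) : y a ≤ x a := by
  have hupper : univ.filter (fun o => R o a) = {a} := by
    ext o
    simpa using ⟨fun h => hR o a h (ha o), fun h => h ▸ ha a⟩
  simpa [hupper] using h a

lemma SDEfficientAssignment.sdPrefers_of_forall_sdPrefers {n m c : ℕ} {pref : Fin n → Pref m}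
    {p q : Fin n → Fin m → ℝ} (hp : SDEfficientAssignment n m c pref p)
    (hq : IsRandomAssignment n m c q) (hqp : ∀ i, sdPrefers (pref i) (q i) (p i)) (j : Fin n) :
    sdPrefers (pref j) (p j) (q j) := by
  by_contra hj
  exact hp ⟨q, hq, hqp, j, hqp j, hj⟩

lemma Anonymous.apply_eq_apply_of_comp_eq {n m : ℕ} {f : (Fin n → Pref m) → Fin n → Fin m → ℝ}
    (hf : Anonymous n m f) {pref : Fin n → Pref m} (hpref : ValidProfile pref)
    {σ : Equiv.Perm (Fin n)} (hσ : (fun j => pref (σ j)) = pref) (i : Fin n) :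
    f pref i = f pref (σ i) := by
  rw [← hf pref σ hpref i, hσ]

lemma Anonymous.apply_apply_eq_of_relabel_eq_comp {n m : ℕ}
    {f : (Fin n → Pref m) → Fin n → Fin m → ℝ} (hA : Anonymous n m f) (hN : Neutral n m f)
    {pref : Fin n → Pref m} (hpref : ValidProfile pref) {σ : Equiv.Perm (Fin n)}
    {τ : Equiv.Perm (Fin m)}
    (h : (fun j a b => pref j (τ.symm a) (τ.symm b)) = fun j => pref (σ j)) (i : Fin n)
    (o : Fin m) :
    f pref (σ i) o = f pref i (τ.symm o) := by
  rw [← hA pref σ hpref i, ← h]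
  exact hN pref τ hpref i o

def clonedProfile : Fin 4 → Pref 4 :=
  ![prefOfRank ![0, 1, 2, 3], prefOfRank ![0, 1, 2, 3],
    prefOfRank ![1, 0, 2, 3], prefOfRank ![1, 0, 2, 3]]

lemma clonedProfile_valid : ValidProfile clonedProfile := by
  intro i
  fin_cases i <;> exact isStrictPref_prefOfRank (by decide)

lemma clonedProfile_comp_swap_zero_one :
    (fun j => clonedProfile (Equiv.swap 0 1 j)) = clonedProfile := by
  funext j
  fin_cases j <;> rfl

lemma clonedProfile_comp_swap_two_three :
    (fun j => clonedProfile (Equiv.swap 2 3 j)) = clonedProfile := by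
  funext j
  fin_cases j <;> rfl

lemma clonedProfile_relabel_swap_zero_one :
    (fun j a b => clonedProfile j ((Equiv.swap 0 1).symm a) ((Equiv.swap 0 1).symm b)) =
      fun j => clonedProfile ((Equiv.swap 0 2 * Equiv.swap 1 3 : Equiv.Perm (Fin 4)) j) := by
  funext j a b
  fin_cases j <;> fin_cases a <;> fin_cases b <;> rfl

noncomputable def clonedShape (t : ℝ) : Fin 4 → Fin 4 → ℝ :=
  ![![1/2 - t, t, 1/4, 1/4], ![1/2 - t, t, 1/4, 1/4],
    ![t, 1/2 - t, 1/4, 1/4], ![t, 1/2 - t, 1/4, 1/4]]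

lemma isRandomAssignment_clonedShape {t : ℝ} (h₀ : 0 ≤ t) (h₁ : t ≤ 1/2) :
    IsRandomAssignment 4 4 1 (clonedShape t) := by
  refine ⟨fun i o => ?_, fun o => ?_, fun i => ?_⟩
  · fin_cases i <;> fin_cases o <;> norm_num [clonedShape] <;> constructor <;> linarith
  · fin_cases o <;> simp [clonedShape, Fin.sum_univ_four] <;> ring
  · fin_cases i <;> simp [clonedShape, Fin.sum_univ_four] <;> ring

lemma eq_clonedShape {p : Fin 4 → Fin 4 → ℝ} (hp : IsRandomAssignment 4 4 1 p)
    (h₁ : p 1 = p 0) (h₃ : p 3 = p 2) (h₂ : ∀ o, p 2 o = p 0 (Equiv.swap 0 1 o)) :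
    p = clonedShape (p 0 1) := by
  have hcol : ∀ o, 2 * p 0 o + 2 * p 0 (Equiv.swap 0 1 o) = 1 := fun o => by
    rw [← hp.2.1 o, Fin.sum_univ_four, h₁, h₃, h₂]; ring
  have hswap₂ : Equiv.swap (0 : Fin 4) 1 2 = 2 := by decide
  have hswap₃ : Equiv.swap (0 : Fin 4) 1 3 = 3 := by decide
  have ha := hcol 0
  have hc := hcol 2
  have hd := hcol 3
  simp only [Equiv.swap_apply_left, hswap₂, hswap₃] at ha hc hd
  funext i o
  fin_cases i <;> fin_cases o <;> simp [clonedShape, h₁, h₃, h₂, hswap₂, hswap₃] <;> linarith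

lemma clonedShape_zero_sdPrefers {t : ℝ} (ht : 0 ≤ t) (i : Fin 4) :
    sdPrefers (clonedProfile i) (clonedShape 0 i) (clonedShape t i) := by
  obtain ⟨u, v, huv, hshift⟩ : ∃ u v, clonedProfile i u v ∧
      clonedShape 0 i = clonedShape t i + t • (Pi.single u 1 - Pi.single v 1) := by
    fin_cases i <;> [use 0, 1; use 0, 1; use 1, 0; use 1, 0] <;>
      refine ⟨by simp [clonedProfile, prefOfRank], ?_⟩ <;>
      funext o <;> fin_cases o <;> simp [clonedShape]
  rw [hshift]
  exact sdPrefers_add_smul_single_sub_single (clonedProfile_valid i).2.1 huv ht _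

/-- With `n = 4` agents, `m = 4` objects `a,b,c,d` (indices
`0,1,2,3`) and `c = 1`: any anonymous, neutral, SD-efficient assignment rule
must, at the profile where agents 1 and 2 report `a ≻ b ≻ c ≻ d` and agents 3
and 4 report `b ≻ a ≻ c ≻ d`, return the assignment in which agents 1 and 2
each get `a` with probability `1/2`, `b` with probability `0`, and `c, d` each
with probability `1/4`, while agents 3 and 4 each get `b` with probability
`1/2`, `a` with probability `0`, and `c, d` each with probability `1/4`. -/
theorem rule_value_at_cloned_profile
    (f : (Fin 4 → Pref 4) → Fin 4 → Fin 4 → ℝ)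
    (hRA : ∀ pref, ValidProfile pref → IsRandomAssignment 4 4 1 (f pref))
    (hAnon : Anonymous 4 4 f) (hNeut : Neutral 4 4 f)
    (hEff : ∀ pref, ValidProfile pref → SDEfficientAssignment 4 4 1 pref (f pref)) :
    f ![prefOfRank ![0, 1, 2, 3], prefOfRank ![0, 1, 2, 3],
        prefOfRank ![1, 0, 2, 3], prefOfRank ![1, 0, 2, 3]] =
      ![![1/2, 0, 1/4, 1/4], ![1/2, 0, 1/4, 1/4],
        ![0, 1/2, 1/4, 1/4], ![0, 1/2, 1/4, 1/4]] := by
  change f clonedProfile = _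
  have hP := clonedProfile_valid
  have hp := hRA _ hP
  have hshape : f clonedProfile = clonedShape (f clonedProfile 0 1) :=
    eq_clonedShape hp
      (hAnon.apply_eq_apply_of_comp_eq hP clonedProfile_comp_swap_zero_one 0).symm
      (hAnon.apply_eq_apply_of_comp_eq hP clonedProfile_comp_swap_two_three 2).symm
      (hAnon.apply_apply_eq_of_relabel_eq_comp hNeut hP clonedProfile_relabel_swap_zero_one 0)
  set t := f clonedProfile 0 1
  have ht : 0 ≤ t := (hp.1 0 1).1
  have hdom := (hEff _ hP).sdPrefers_of_forall_sdPrefers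
    (isRandomAssignment_clonedShape le_rfl (by norm_num)) fun i => by
      rw [hshape]; exact clonedShape_zero_sdPrefers ht i
  have hmass_a : 1/2 ≤ 1/2 - t := by
    have := (hdom 0).apply_le_apply_of_top (hP 0).2.2.1 (a := 0)
      (fun o => by fin_cases o <;> simp [clonedProfile, prefOfRank])
    simpa [hshape, clonedShape] using this
  rw [hshape, show t = 0 by linarith]
  norm_num [clonedShape]
end
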